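/- Let φ : ℝⁿ → ℝ and fix k ∈ ℕ, k ≥ 1. Let Ã be a set of points x such that there exists p_x ∈ ℝⁿ with |p_x| ≤ k and φ(x) ≤ φ(z) − ⟨p_x, x − z⟩ + k|x − z|² for all z ∈ closedBall(x, 1/k). Suppose Ã ⊆ B(x̄, 1/(2k)) for some x̄. Define φ̃(x) := sup_{y ∈ Ã} ( φ(y) + ⟨p_y, y − x⟩ − k|y − x|² ) for x ∈ B(x̄, 1/(2k)). Then φ̃(x) = φ(x) for every x ∈ Ã. -/

import Mathlib

open Set Metric

lemma dist_lt_of_mem_ball_half {X : Type*} [PseudoMetricSpace X] {x₀ x y : X} {r : ℝ}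
    (hx : x ∈ ball x₀ (r / 2)) (hy : y ∈ ball x₀ (r / 2)) : dist x y < r := by
  rw [mem_ball'] at hx hy
  linarith [dist_triangle_left x y x₀]

lemma support_quadratic_le {n : ℕ} {φ : EuclideanSpace ℝ (Fin n) → ℝ} {k : ℕ}
    {p : EuclideanSpace ℝ (Fin n) → EuclideanSpace ℝ (Fin n)}
    {Atil : Set (EuclideanSpace ℝ (Fin n))} {x₀ : EuclideanSpace ℝ (Fin n)}
    (hsub : Atil ⊆ ball x₀ (1 / (2 * k)))
    (hsupp : ∀ y ∈ Atil, ∀ z ∈ closedBall y (1 / k),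
      φ y ≤ φ z - (inner ℝ (p y) (y - z) : ℝ) + k * ‖y - z‖ ^ 2)
    {x y : EuclideanSpace ℝ (Fin n)} (hx : x ∈ Atil) (hy : y ∈ Atil) :
    φ y + (inner ℝ (p y) (y - x) : ℝ) - k * ‖y - x‖ ^ 2 ≤ φ x := by
  have hhalf : (1 : ℝ) / (2 * k) = 1 / k / 2 := by rw [div_div, mul_comm]
  have hxy : x ∈ closedBall y (1 / k) :=
    mem_closedBall.2 (dist_lt_of_mem_ball_half (hhalf ▸ hsub hx) (hhalf ▸ hsub hy)).le
  linarith [hsupp y hy x hxy]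

theorem stmt2_general {n : ℕ} (φ : EuclideanSpace ℝ (Fin n) → ℝ) (k : ℕ)
    (p : EuclideanSpace ℝ (Fin n) → EuclideanSpace ℝ (Fin n))
    (Atil : Set (EuclideanSpace ℝ (Fin n))) (x₀ : EuclideanSpace ℝ (Fin n))
    (hsub : Atil ⊆ ball x₀ (1 / (2 * k)))
    (hsupp : ∀ x ∈ Atil, ‖p x‖ ≤ k ∧ ∀ z ∈ closedBall x (1 / k),
      φ x ≤ φ z - (inner ℝ (p x) (x - z) : ℝ) + k * ‖x - z‖ ^ 2) :
    ∀ x ∈ Atil,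
      sSup ((fun y => φ y + (inner ℝ (p y) (y - x) : ℝ) - k * ‖y - x‖ ^ 2) '' Atil) = φ x := by
  intro x hx
  refine IsGreatest.csSup_eq ⟨⟨x, hx, by simp⟩, ?_⟩
  rintro _ ⟨y, hy, rfl⟩
  exact support_quadratic_le hsub (fun y hy => (hsupp y hy).2) hx hy

theorem stmt2 {n : ℕ} (φ : EuclideanSpace ℝ (Fin n) → ℝ) (k : ℕ) (hk : 1 ≤ k)
    (p : EuclideanSpace ℝ (Fin n) → EuclideanSpace ℝ (Fin n))
    (Atil : Set (EuclideanSpace ℝ (Fin n))) (x₀ : EuclideanSpace ℝ (Fin n))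
    (hsub : Atil ⊆ ball x₀ (1 / (2 * k)))
    (hsupp : ∀ x ∈ Atil, ‖p x‖ ≤ k ∧ ∀ z ∈ closedBall x (1 / k),
      φ x ≤ φ z - (inner ℝ (p x) (x - z) : ℝ) + k * ‖x - z‖ ^ 2) :
    ∀ x ∈ Atil,
      sSup ((fun y => φ y + (inner ℝ (p y) (y - x) : ℝ) - k * ‖y - x‖ ^ 2) '' Atil) = φ x :=
  stmt2_general φ k p Atil x₀ hsub hsupp
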